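/- arXiv:1107.1735 — 3 statements merged into one kernel-verified Lean document; each statement's English description precedes it below -/
import Mathlib

section
/- Let G be a finite simple graph and let r_1, …, r_k be natural numbers such that r_1 + r_2 + … + r_k ≥ Δ(G) + 1 − k, where Δ(G) denotes the maximum degree of G. Then the vertex set V(G) can be partitioned into sets V_1, …, V_k such that for each i ∈ {1, …, k}, the maximum degree of the induced subgraph G[V_i] is at most r_i. -/
open scoped Classical

/-!
Colour the vertices with `k` colours so as to minimise twice the number of monochromatic edges
minus twice the total allowance `∑ᵥ r (colour of v)`. If some vertex `v` of colour `i` had more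
than `rᵢ` neighbours of its own colour, then, since `deg v < ∑ⱼ (rⱼ + 1)`, some colour `j` has at
most `rⱼ` neighbours of `v`; recolouring `v` with `j` would strictly decrease the potential.
-/

open Finset

theorem Finset.sum_sum_eq_sum_sum_erase_add_two_nsmul {V M : Type*} [Fintype V] [DecidableEq V]
    [AddCommMonoid M] (F : V → V → M) (hF : ∀ u w, F u w = F w u) (v : V) (hv : F v v = 0) :
    ∑ u, ∑ w, F u w = ∑ u ∈ univ.erase v, ∑ w ∈ univ.erase v, F u w + 2 • ∑ w, F v w := by
  have hcol : ∑ u ∈ univ.erase v, F u v = ∑ w, F v w := by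
    rw [← add_sum_erase _ _ (mem_univ v), hv, zero_add]
    exact sum_congr rfl fun u _ => hF u v
  have hrow : ∀ u, ∑ w, F u w = F u v + ∑ w ∈ univ.erase v, F u w :=
    fun u => (add_sum_erase _ _ (mem_univ v)).symm
  rw [← add_sum_erase _ _ (mem_univ v), sum_congr rfl fun u _ => hrow u, sum_add_distrib, hcol,
    two_nsmul]
  abel

namespace SimpleGraph

variable {V ι : Type*} [Fintype V] (G : SimpleGraph V)

noncomputable def colorDegree (f : V → ι) (v : V) (i : ι) : ℕ :=
  ((G.neighborFinset v).filter (f · = i)).card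

theorem sum_colorDegree [Fintype ι] (f : V → ι) (v : V) :
    ∑ i, G.colorDegree f v i = G.degree v := by
  rw [← card_neighborFinset_eq_degree]
  exact (card_eq_sum_card_fiberwise fun w _ => mem_univ (f w)).symm

theorem exists_colorDegree_le [Fintype ι] (f : V → ι) (r : ι → ℕ) {v : V}
    (hv : G.degree v < ∑ i, (r i + 1)) : ∃ i, G.colorDegree f v i ≤ r i := by
  by_contra! hlt
  have : ∑ i, (r i + 1) ≤ ∑ i, G.colorDegree f v i := sum_le_sum fun i _ => hlt i
  rw [sum_colorDegree] at this
  omega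

theorem sum_ite_adj_eq_colorDegree (f : V → ι) (v : V) (i : ι) :
    ∑ w, (if G.Adj v w ∧ i = f w then (1 : ℤ) else 0) = G.colorDegree f v i := by
  rw [sum_boole, colorDegree, neighborFinset_eq_filter, filter_filter]
  simp_rw [eq_comm (a := i)]

noncomputable def lovaszPotential (r : ι → ℕ) (f : V → ι) : ℤ :=
  ∑ u, ∑ w, (if G.Adj u w ∧ f u = f w then 1 else 0) - 2 * ∑ u, (r (f u) : ℤ)

theorem lovaszPotential_update (r : ι → ℕ) (f : V → ι) (v : V) (j : ι) :
    G.lovaszPotential r (Function.update f v j) = G.lovaszPotential r f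
      + 2 * ((G.colorDegree f v j : ℤ) - G.colorDegree f v (f v))
      + 2 * ((r (f v) : ℤ) - r j) := by
  set g := Function.update f v j
  have hg : ∀ u ≠ v, g u = f u := fun u hu => Function.update_of_ne hu j f
  have hgv : g v = j := Function.update_self v j f
  have hsplit := fun h : V → ι => sum_sum_eq_sum_sum_erase_add_two_nsmul
    (fun u w => if G.Adj u w ∧ h u = h w then (1 : ℤ) else 0)
    (fun u w => by simp only [G.adj_comm u w, eq_comm (a := h u)]) v (by simp)
  have hrest : ∑ u ∈ univ.erase v, ∑ w ∈ univ.erase v,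
        (if G.Adj u w ∧ g u = g w then (1 : ℤ) else 0)
      = ∑ u ∈ univ.erase v, ∑ w ∈ univ.erase v, (if G.Adj u w ∧ f u = f w then 1 else 0) :=
    sum_congr rfl fun u hu => sum_congr rfl fun w hw => by
      rw [hg u (ne_of_mem_erase hu), hg w (ne_of_mem_erase hw)]
  have hrow : ∑ w, (if G.Adj v w ∧ g v = g w then (1 : ℤ) else 0) = G.colorDegree f v j := by
    rw [← sum_ite_adj_eq_colorDegree]
    refine sum_congr rfl fun w _ => if_congr (and_congr_right fun hadj => ?_) rfl rfl
    rw [hgv, hg w hadj.ne.symm]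
  have hallowance : ∀ h : V → ι,
      ∑ u, (r (h u) : ℤ) = r (h v) + ∑ u ∈ univ.erase v, (r (h u) : ℤ) :=
    fun h => (add_sum_erase _ _ (mem_univ v)).symm
  have hallowance_rest : ∑ u ∈ univ.erase v, (r (g u) : ℤ) = ∑ u ∈ univ.erase v, (r (f u) : ℤ) :=
    sum_congr rfl fun u hu => by rw [hg u (ne_of_mem_erase hu)]
  rw [lovaszPotential, lovaszPotential, hsplit g, hsplit f, hrest, hrow,
    sum_ite_adj_eq_colorDegree, hallowance g, hallowance f, hallowance_rest, hgv]
  ring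

theorem colorDegree_le_of_lovaszPotential_minimal [Fintype ι] {r : ι → ℕ} {f : V → ι}
    (hf : ∀ g, G.lovaszPotential r f ≤ G.lovaszPotential r g) {v : V}
    (hv : G.degree v < ∑ i, (r i + 1)) : G.colorDegree f v (f v) ≤ r (f v) := by
  by_contra! hgt
  obtain ⟨j, hj⟩ := G.exists_colorDegree_le f r hv
  have := hf (Function.update f v j)
  rw [lovaszPotential_update] at this
  omega

theorem exists_coloring_colorDegree_le [Fintype ι] [Nonempty ι] (r : ι → ℕ)
    (h : ∀ v, G.degree v < ∑ i, (r i + 1)) :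
    ∃ f : V → ι, ∀ v, G.colorDegree f v (f v) ≤ r (f v) := by
  obtain ⟨f, hf⟩ := Finite.exists_min (G.lovaszPotential r)
  exact ⟨f, fun v => G.colorDegree_le_of_lovaszPotential_minimal hf (h v)⟩

theorem maxDegree_induce_colorClass_le [DecidableEq ι] (f : V → ι) (i : ι) {d : ℕ}
    (h : ∀ v, f v = i → G.colorDegree f v i ≤ d) :
    (G.induce (↑(univ.filter (f · = i)) : Set V)).maxDegree ≤ d := by
  refine maxDegree_le_of_forall_degree_le _ _ fun ⟨v, hv⟩ => ?_
  have hfv : f v = i := by simpa using hv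
  calc (G.induce _).degree ⟨v, hv⟩ = ((G.induce _).neighborFinset ⟨v, hv⟩).card :=
        (card_neighborFinset_eq_degree _ _).symm
    _ ≤ G.colorDegree f v i := by
        refine card_le_card_of_injOn Subtype.val (fun w hw => ?_) Subtype.val_injective.injOn
        have hfw : f w = i := by simpa using w.2
        simpa [colorDegree, hfw] using hw
    _ ≤ d := h v hfv

end SimpleGraph

/-- **Lovász's decomposition lemma.**  If `r₁ + ⋯ + r_k ≥ Δ(G) + 1 - k`, then the vertex
set of `G` can be partitioned into sets `V₁, …, V_k` with `Δ(G[Vᵢ]) ≤ rᵢ` for each `i`. -/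
theorem lovasz_partition {V : Type*} [Fintype V] (G : SimpleGraph V)
    (k : ℕ) (r : Fin k → ℕ)
    (hsum : G.maxDegree + 1 ≤ ∑ i, r i + k) :
    ∃ P : Fin k → Finset V,
      (∀ i j, i ≠ j → Disjoint (P i) (P j)) ∧
      (∀ v : V, ∃ i, v ∈ P i) ∧
      ∀ i : Fin k, (G.induce (↑(P i) : Set V)).maxDegree ≤ r i := by
  have hdeg : ∀ v, G.degree v < ∑ i, (r i + 1) := fun v => by
    have := G.degree_le_maxDegree v
    simp only [sum_add_distrib, sum_const, card_univ, Fintype.card_fin, smul_eq_mul, mul_one]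
    omega
  have : Nonempty (Fin k) := by
    rcases k with _ | k
    · simp at hsum
    · exact ⟨0⟩
  obtain ⟨f, hf⟩ := G.exists_coloring_colorDegree_le r hdeg
  refine ⟨fun i => univ.filter (f · = i), fun i j hij => ?_, fun v => ⟨f v, by simp⟩,
    fun i => G.maxDegree_induce_colorClass_le f i fun v hv => hv ▸ hf v⟩
  exact disjoint_filter.2 fun v _ hi hj => hij (hi.symm.trans hj)
end

section
/- Let r be a natural number with r ≥ 2. Define h : 𝒢 → ℕ on the collection 𝒢 of all finite simple connected graphs by h(G) = 1 if G is r-regular and not a complete graph, and h(G) = 0 otherwise. Then h is an r-height function. -/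
open scoped Classical

universe u

/-- A "height function" assigns a natural number to every finite simple graph
(its values are only relevant on connected graphs, the collection `𝒢`). -/
def HeightFun : Type (u + 1) := ∀ (α : Type u) [Fintype α], SimpleGraph α → ℕ

/-- A vertex `x` of a connected graph `G` is `h`-critical if `G - x` is connected and
nonempty and `h (G - x) < h G`. -/
def IsHCritical (h : HeightFun.{u}) {α : Type u} [Fintype α]
    (G : SimpleGraph α) (x : α) : Prop :=
  (G.induce {y | y ≠ x}).Connected ∧
    h _ (G.induce {y | y ≠ x}) < h _ G

/-- A pair of vertices `{x, y}` of `G` is an `h`-critical pair if `G - {x, y}` is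
connected and nonempty, `x` is `h`-critical in `G - y` and `y` is `h`-critical in
`G - x`. -/
def IsHCriticalPair (h : HeightFun.{u}) {α : Type u} [Fintype α]
    (G : SimpleGraph α) (x y : α) : Prop :=
  ∃ hxy : x ≠ y,
    (G.induce {z | z ≠ x ∧ z ≠ y}).Connected ∧
    IsHCritical h (G.induce {z | z ≠ y}) ⟨x, hxy⟩ ∧
    IsHCritical h (G.induce {z | z ≠ x}) ⟨y, hxy.symm⟩

/-- `h` is an `r`-height function if it satisfies the four properties from the paper,
for every finite simple connected graph `G`. -/
def IsRHeightFun (r : ℕ) (h : HeightFun.{u}) : Prop :=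
  (∀ (α : Type u) [Fintype α] (G : SimpleGraph α), G.Connected → 0 < h _ G →
      ∃ x : α, IsHCritical h G x ∧ r ≤ G.degree x) ∧
  (∀ (α : Type u) [Fintype α] (G : SimpleGraph α) (x : α), G.Connected →
      IsHCritical h G x → r ≤ G.degree x →
      h _ (G.induce {y | y ≠ x}) = h _ G - 1) ∧
  (∀ (α : Type u) [Fintype α] (G : SimpleGraph α) (x : α), G.Connected →
      IsHCritical h G x → r ≤ G.degree x →
      ∃ y : α, IsHCritical h G y ∧ r ≤ G.degree y ∧ y ≠ x ∧ ¬ G.Adj x y) ∧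
  (∀ (α : Type u) [Fintype α] (G : SimpleGraph α) (x y : α), G.Connected →
      IsHCriticalPair h G x y →
      r ≤ ((G.neighborFinset x).erase y).card →
      r ≤ ((G.neighborFinset y).erase x).card →
      ∃ z : α, G.Adj x z ∧ G.Adj y z ∧ r + 1 ≤ G.degree z)

/-! In a non-complete `r`-regular graph every vertex has a neighbour, so deleting any vertex
destroys regularity: the critical vertices are exactly the non-cut vertices. A vertex farthest
from `x` is a non-cut vertex, and it is not adjacent to `x` since regularity and
non-completeness leave no universal vertex. For a critical pair `{x, y}` both `G - x` and
`G - y` are `r`-regular; a neighbour `z ≠ y` of `x` then has degree `r + 1` in `G`, and since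
its degree drops to `r` in `G - y` it is adjacent to `y`. -/

open Finset

namespace SimpleGraph

variable {α : Type*} {G : SimpleGraph α}

lemma degree_induce_ne [Fintype α] (G : SimpleGraph α) {x v : α} (hv : v ≠ x) :
    (G.induce {y | y ≠ x}).degree ⟨v, hv⟩ = ((G.neighborFinset v).erase x).card := by
  rw [← card_neighborFinset_eq_degree, ← card_map (.subtype (· ∈ {y | y ≠ x})),
    map_neighborFinset_induce]
  congr 1
  ext
  simp [and_comm]

/-- A shortest walk from `x` to any `z ≠ y` avoids `y`, since every vertex on it other than
`z` is strictly closer to `x` than `z`. -/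
lemma Connected.connected_induce_ne_of_forall_dist_le (hc : G.Connected) {x y : α}
    (hxy : x ≠ y) (hfar : ∀ z, G.dist x z ≤ G.dist x y) :
    (G.induce {z | z ≠ y}).Connected := by
  have hreach : ∀ z (hz : z ≠ y), (G.induce {z | z ≠ y}).Reachable ⟨x, hxy⟩ ⟨z, hz⟩ := by
    intro z hz
    obtain ⟨p, hp⟩ := hc.exists_walk_length_eq_dist x z
    have hp_avoid : ∀ w ∈ p.support, w ∈ {z | z ≠ y} := by
      intro w hw
      obtain ⟨q, q', rfl⟩ := Walk.mem_support_iff_exists_append.mp hw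
      rintro rfl
      have hq := SimpleGraph.dist_le q
      have hz_le := hfar z
      rw [Walk.length_append] at hp
      exact hz (q'.eq_of_length_eq_zero (by omega)).symm
    exact ⟨p.induce _ hp_avoid⟩
  rw [connected_iff]
  exact ⟨fun a b => (hreach a a.2).symm.trans (hreach b b.2), ⟨⟨x, hxy⟩⟩⟩

namespace IsRegularOfDegree

variable [Fintype α] {r : ℕ}

lemma not_isRegularOfDegree_induce_ne (hreg : G.IsRegularOfDegree r) {x w : α}
    (hadj : G.Adj x w) : ¬ (G.induce {y | y ≠ x}).IsRegularOfDegree r := by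
  intro h
  have hx : x ∈ G.neighborFinset w := by simpa using hadj.symm
  have hw := h ⟨w, hadj.ne'⟩
  rw [degree_induce_ne, card_erase_of_mem hx] at hw
  have hpos := card_pos.mpr ⟨x, hx⟩
  have hdeg : (G.neighborFinset w).card = r := hreg w
  omega

/-- A universal vertex forces `r = |V| - 1`, hence every vertex is universal. -/
lemma not_isUniversal (hreg : G.IsRegularOfDegree r) (hne : G ≠ ⊤) (x : α) :
    ¬ G.IsUniversal x := by
  intro hx
  have huniv : ∀ u, G.IsUniversal u := fun u => (G.degree_eq_card_sub_one u).mp <| by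
    rw [hreg.degree_eq u, ← hreg.degree_eq x, degree_eq_card_sub_one]
    exact hx
  exact hne (eq_top_iff.mpr fun u _ huv => huniv u huv)

lemma adj_and_degree_eq_of_induce_ne {x y z : α}
    (hx : (G.induce {w | w ≠ x}).IsRegularOfDegree r)
    (hy : (G.induce {w | w ≠ y}).IsRegularOfDegree r) (hxz : G.Adj x z) (hzy : z ≠ y) :
    G.Adj y z ∧ G.degree z = r + 1 := by
  have hxmem : x ∈ G.neighborFinset z := by simpa using hxz.symm
  have hdx := hx ⟨z, hxz.ne'⟩
  have hdy := hy ⟨z, hzy⟩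
  rw [degree_induce_ne, card_erase_of_mem hxmem] at hdx
  rw [degree_induce_ne] at hdy
  have hpos := card_pos.mpr ⟨x, hxmem⟩
  have hcard : (G.neighborFinset z).card = r + 1 := by omega
  refine ⟨?_, hcard⟩
  by_contra hyz
  rw [erase_eq_of_notMem (by simpa using fun h => hyz h.symm)] at hdy
  omega

end IsRegularOfDegree

end SimpleGraph

open SimpleGraph

noncomputable def regularNoncompleteHeight (r : ℕ) : HeightFun.{u} :=
  fun _ _ G => if G.IsRegularOfDegree r ∧ G ≠ ⊤ then 1 else 0

section regularNoncompleteHeight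

variable {r : ℕ} {α : Type u} [Fintype α] {G : SimpleGraph α}

lemma regularNoncompleteHeight_le_one (r : ℕ) (G : SimpleGraph α) :
    regularNoncompleteHeight r α G ≤ 1 := by
  unfold regularNoncompleteHeight
  split_ifs <;> omega

lemma regularNoncompleteHeight_pos_iff :
    0 < regularNoncompleteHeight r α G ↔ G.IsRegularOfDegree r ∧ G ≠ ⊤ := by
  unfold regularNoncompleteHeight
  split_ifs <;> simp_all

lemma IsHCritical.isRegularOfDegree_and_ne_top {x : α}
    (hx : IsHCritical (regularNoncompleteHeight r) G x) : G.IsRegularOfDegree r ∧ G ≠ ⊤ :=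
  regularNoncompleteHeight_pos_iff.mp (Nat.zero_lt_of_lt hx.2)

lemma isHCritical_of_forall_dist_le (hr : 0 < r) (hc : G.Connected)
    (hreg : G.IsRegularOfDegree r) (hne : G ≠ ⊤) {x y : α} (hxy : x ≠ y)
    (hfar : ∀ z, G.dist x z ≤ G.dist x y) : IsHCritical (regularNoncompleteHeight r) G y := by
  refine ⟨hc.connected_induce_ne_of_forall_dist_le hxy hfar, ?_⟩
  obtain ⟨w, hw⟩ : (G.neighborFinset y).Nonempty :=
    card_pos.mp (by rwa [card_neighborFinset_eq_degree, hreg.degree_eq])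
  have hnreg := hreg.not_isRegularOfDegree_induce_ne ((mem_neighborFinset _ _ _).mp hw)
  unfold regularNoncompleteHeight
  rw [if_neg fun h => hnreg h.1, if_pos ⟨hreg, hne⟩]
  exact one_pos

/-- A vertex farthest from `x` is critical, and it is not a neighbour of `x` because `x` is
not universal. -/
lemma exists_isHCritical_ne_not_adj (hr : 0 < r) (hc : G.Connected)
    (hreg : G.IsRegularOfDegree r) (hne : G ≠ ⊤) (x : α) :
    ∃ y, IsHCritical (regularNoncompleteHeight r) G y ∧ y ≠ x ∧ ¬ G.Adj x y := by
  obtain ⟨y, -, hfar⟩ := exists_max_image univ (G.dist x) ⟨x, mem_univ x⟩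
  obtain ⟨v, hxv, hnadj⟩ : ∃ v, x ≠ v ∧ ¬ G.Adj x v := by
    simpa [IsUniversal] using hreg.not_isUniversal hne x
  have hdist : 2 ≤ G.dist x y :=
    (hc.one_lt_dist_of_ne_of_not_adj hxv hnadj).trans_le (hfar v (mem_univ v))
  have hxy : x ≠ y := by
    rintro rfl
    simp at hdist
  refine ⟨y, isHCritical_of_forall_dist_le hr hc hreg hne hxy fun z => hfar z (mem_univ z),
    hxy.symm, fun hadj => ?_⟩
  rw [← dist_eq_one_iff_adj] at hadj
  omega

end regularNoncompleteHeight

/-- For `r ≥ 2`, the function giving `1` on non-complete `r`-regular graphs and `0`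
otherwise is an `r`-height function. -/
theorem isRHeightFun_of_regular_noncomplete (r : ℕ) (hr : 2 ≤ r) :
    IsRHeightFun.{u} r
      (fun α [Fintype α] (G : SimpleGraph α) =>
        if G.IsRegularOfDegree r ∧ G ≠ ⊤ then 1 else 0) := by
  show IsRHeightFun r (regularNoncompleteHeight r)
  have hr₀ : 0 < r := by omega
  refine ⟨fun α _ G hc hpos => ?_, fun α _ G x _ hx _ => ?_, fun α _ G x hc hx _ => ?_,
    fun α _ G x y _ hxy hdx _ => ?_⟩
  · obtain ⟨hreg, hne⟩ := regularNoncompleteHeight_pos_iff.mp hpos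
    obtain ⟨y, hy, -⟩ := exists_isHCritical_ne_not_adj hr₀ hc hreg hne hc.nonempty.some
    exact ⟨y, hy, (hreg y).ge⟩
  · have := regularNoncompleteHeight_le_one r G
    have := hx.2
    omega
  · obtain ⟨hreg, hne⟩ := hx.isRegularOfDegree_and_ne_top
    obtain ⟨y, hy, hyx, hnadj⟩ := exists_isHCritical_ne_not_adj hr₀ hc hreg hne x
    exact ⟨y, hy, (hreg y).ge, hyx, hnadj⟩
  · obtain ⟨hxy, -, hx, hy⟩ := hxy
    obtain ⟨z, hz⟩ := card_pos.mp (hr₀.trans_le hdx)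
    obtain ⟨hzy, hxz⟩ := by simpa using hz
    obtain ⟨hyz, hdeg⟩ := IsRegularOfDegree.adj_and_degree_eq_of_induce_ne
      hy.isRegularOfDegree_and_ne_top.1 hx.isRegularOfDegree_and_ne_top.1 hxz hzy
    exact ⟨z, hxz, hyz, hdeg.ge⟩
end

section
/- Let G be a finite simple graph and let r_1, …, r_k be natural numbers such that r_1 + r_2 + … + r_k ≥ Δ(G) + 2 − k, where Δ(G) denotes the maximum degree of G. For a partition P = (V_1, …, V_k) of V(G), define f(P) to be the sum over i ∈ {1, …, k} of (the number of edges of G[V_i]) − r_i·|V_i|. If P = (V_1, …, V_k) is a partition of V(G) minimizing f(P) over all partitions of V(G) into k parts, then for each i ∈ {1, …, k} the maximum degree of G[V_i] is at most r_i. -/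
/-!
Suppose some `v ∈ V_i` had more than `r_i` neighbours in `V_i`, and let `d_l` be the number of
neighbours of `v` in `V_l`. Since `∑ d_l = deg v ≤ Δ(G) < ∑ (r_l + 1)`, some part `V_j` has
`d_j ≤ r_j`, and `j ≠ i`. Moving `v` from `V_i` to `V_j` changes `f` by
`(r_i - d_i) + (d_j - r_j) < 0`, contradicting minimality.
-/

open scoped Classical

open Finset Function

namespace Finset

variable {α ι : Type*} [DecidableEq α] [DecidableEq ι]

def moveElement (P : ι → Finset α) (a : α) (j : ι) : ι → Finset α :=
  fun l => if l = j then insert a (P l) else (P l).erase a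

variable {P : ι → Finset α} {a : α} {j : ι}

theorem moveElement_self : moveElement P a j j = insert a (P j) := if_pos rfl

theorem moveElement_of_ne {l : ι} (h : l ≠ j) : moveElement P a j l = (P l).erase a := if_neg h

theorem pairwise_disjoint_moveElement (hdisj : Pairwise (Disjoint on P)) :
    Pairwise (Disjoint on moveElement P a j) := by
  intro l m hlm
  simp only [Function.onFun, moveElement]
  split_ifs with hl hm hm
  · exact absurd (hl.trans hm.symm) hlm
  · exact disjoint_insert_left.mpr ⟨notMem_erase a _, (hdisj hlm).mono_right (erase_subset a _)⟩
  · exact disjoint_insert_right.mpr ⟨notMem_erase a _, (hdisj hlm).mono_left (erase_subset a _)⟩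
  · exact (hdisj hlm).mono (erase_subset a _) (erase_subset a _)

theorem exists_mem_moveElement (hcover : ∀ b, ∃ i, b ∈ P i) (b : α) :
    ∃ i, b ∈ moveElement P a j i := by
  by_cases hb : b = a
  · exact ⟨j, by simp [moveElement, hb]⟩
  · obtain ⟨i, hi⟩ := hcover b
    refine ⟨i, ?_⟩
    unfold moveElement
    split_ifs
    exacts [mem_insert_of_mem hi, mem_erase.mpr ⟨hb, hi⟩]

end Finset

namespace SimpleGraph

variable {V : Type*} [Fintype V] (G : SimpleGraph V)

theorem card_edgeFinset_induce_eq_card_inter_sym2 (s : Finset V) :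
    #(G.induce ↑s).edgeFinset = #(G.edgeFinset ∩ s.sym2) := by
  rw [← card_filter_edgeFinset_toFinset_subset, filter_edgeFinset_toFinset_subset]

theorem card_edgeFinset_induce_insert {s : Finset V} {v : V} (hv : v ∉ s) :
    #(G.induce ↑(insert v s)).edgeFinset =
      #(G.induce ↑s).edgeFinset + #(G.neighborFinset v ∩ s) := by
  have hnew : G.edgeFinset ∩ (insert v s).image (fun w => s(v, w)) =
      (G.neighborFinset v ∩ s).image (fun w => s(v, w)) := by
    ext e
    simp only [mem_inter, mem_image, mem_insert, mem_edgeFinset, mem_neighborFinset]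
    constructor
    · rintro ⟨he, w, hw, rfl⟩
      rcases hw with rfl | hw
      · simp at he
      · exact ⟨w, ⟨he, hw⟩, rfl⟩
    · rintro ⟨w, ⟨hvw, hw⟩, rfl⟩
      exact ⟨hvw, w, Or.inr hw, rfl⟩
  have hdisj : Disjoint (G.edgeFinset ∩ (insert v s).image (fun w => s(v, w)))
      (G.edgeFinset ∩ s.sym2) := by
    rw [Finset.disjoint_left]
    intro e he he'
    apply hv
    obtain ⟨w, -, rfl⟩ := mem_image.mp (mem_inter.mp he).2
    exact mk_mem_sym2_iff.mp (mem_inter.mp he').2 |>.1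
  rw [card_edgeFinset_induce_eq_card_inter_sym2, card_edgeFinset_induce_eq_card_inter_sym2,
    sym2_insert, inter_union_distrib_left, card_union_of_disjoint hdisj, hnew,
    card_image_of_injective _ (fun _ _ h => Sym2.congr_right.mp h), add_comm]

theorem card_edgeFinset_induce_erase {s : Finset V} {v : V} (hv : v ∈ s) :
    #(G.induce ↑s).edgeFinset =
      #(G.induce ↑(s.erase v)).edgeFinset + #(G.neighborFinset v ∩ s) := by
  conv_lhs => rw [← insert_erase hv]
  have hvv : v ∉ G.neighborFinset v ∩ s := fun h => by simp at h
  rw [card_edgeFinset_induce_insert G (notMem_erase v s), inter_erase, erase_eq_of_notMem hvv]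

theorem degree_induce_eq_card_neighborFinset_inter (s : Finset V) (v : ↥(s : Set V)) :
    (G.induce ↑s).degree v = #(G.neighborFinset v ∩ s) := by
  have h := congrArg card (map_neighborFinset_induce (G := G) (s := (s : Set V)) v)
  rw [card_map, toFinset_coe, card_neighborFinset_eq_degree] at h
  convert h

variable {ι : Type*} [Fintype ι]

theorem sum_card_neighborFinset_inter_eq_degree {P : ι → Finset V}
    (hdisj : Pairwise (Disjoint on P)) (hcover : ∀ v, ∃ i, v ∈ P i) (v : V) :
    ∑ i, #(G.neighborFinset v ∩ P i) = G.degree v := by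
  have hunion : univ.biUnion P = univ :=
    eq_univ_of_forall fun w => mem_biUnion.mpr ((hcover w).imp fun i hi => ⟨mem_univ i, hi⟩)
  rw [← card_neighborFinset_eq_degree, ← card_biUnion, ← inter_biUnion, hunion, inter_univ]
  exact fun i _ j _ hij => (hdisj hij).mono inter_subset_right inter_subset_right

noncomputable def partitionCost (r : ι → ℕ) (P : ι → Finset V) : ℤ :=
  ∑ i, ((#(G.induce ↑(P i)).edgeFinset : ℤ) - r i * #(P i))

theorem partitionCost_moveElement [DecidableEq ι] (r : ι → ℕ) {P : ι → Finset V}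
    (hdisj : Pairwise (Disjoint on P)) {v : V} {i j : ι} (hv : v ∈ P i) (hij : i ≠ j) :
    G.partitionCost r (moveElement P v j) = G.partitionCost r P +
      (r i - #(G.neighborFinset v ∩ P i)) + (#(G.neighborFinset v ∩ P j) - r j) := by
  have hterm : ∀ l, ((#(G.induce ↑(moveElement P v j l)).edgeFinset : ℤ) -
      r l * #(moveElement P v j l)) = ((#(G.induce ↑(P l)).edgeFinset : ℤ) - r l * #(P l)) +
      (if l = i then (r i : ℤ) - #(G.neighborFinset v ∩ P i) else 0) +
      (if l = j then (#(G.neighborFinset v ∩ P j) : ℤ) - r j else 0) := by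
    intro l
    by_cases hlj : l = j
    · subst hlj
      have hvl : v ∉ P l := Finset.disjoint_left.mp (hdisj hij) hv
      rw [moveElement_self, card_edgeFinset_induce_insert G hvl, card_insert_of_notMem hvl,
        if_pos rfl, if_neg hij.symm]
      push_cast
      ring
    by_cases hli : l = i
    · subst hli
      rw [moveElement_of_ne hlj, card_edgeFinset_induce_erase G hv, ← card_erase_add_one hv,
        if_pos rfl, if_neg hlj]
      push_cast
      ring
    · have hvl : v ∉ P l := Finset.disjoint_left.mp (hdisj (Ne.symm hli)) hv
      rw [moveElement_of_ne hlj, erase_eq_of_notMem hvl, if_neg hli, if_neg hlj]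
      ring
  simp only [partitionCost, hterm, sum_add_distrib, Fintype.sum_ite_eq']

end SimpleGraph

open SimpleGraph in
/-- If `r₁ + ⋯ + r_k ≥ Δ(G) + 2 - k` and `P = (V₁, …, V_k)` is a partition of `V(G)`
minimizing `f(P) = ∑ᵢ (‖G[Vᵢ]‖ - rᵢ·|Vᵢ|)` over all partitions of `V(G)` into `k` parts,
then `Δ(G[Vᵢ]) ≤ rᵢ` for each `i`. -/
theorem maxDegree_le_of_min_f {V : Type*} [Fintype V] (G : SimpleGraph V)
    (k : ℕ) (r : Fin k → ℕ)
    (hsum : G.maxDegree + 2 ≤ ∑ i, r i + k)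
    (P : Fin k → Finset V)
    (hdisj : ∀ i j, i ≠ j → Disjoint (P i) (P j))
    (hcover : ∀ v : V, ∃ i, v ∈ P i)
    (hmin : ∀ Q : Fin k → Finset V,
      (∀ i j, i ≠ j → Disjoint (Q i) (Q j)) → (∀ v : V, ∃ i, v ∈ Q i) →
      ∑ i, (((G.induce (↑(P i) : Set V)).edgeFinset.card : ℤ) - r i * (P i).card) ≤
        ∑ i, (((G.induce (↑(Q i) : Set V)).edgeFinset.card : ℤ) - r i * (Q i).card)) :
    ∀ i : Fin k, (G.induce (↑(P i) : Set V)).maxDegree ≤ r i := by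
  intro i
  refine maxDegree_le_of_forall_degree_le _ _ fun ⟨v, hv⟩ => ?_
  rw [degree_induce_eq_card_neighborFinset_inter]
  by_contra! hdeg : r i < #(G.neighborFinset v ∩ P i)
  obtain ⟨j, -, hj⟩ : ∃ j ∈ univ, #(G.neighborFinset v ∩ P j) < r j + 1 := by
    refine exists_lt_of_sum_lt ?_
    rw [G.sum_card_neighborFinset_inter_eq_degree hdisj hcover, sum_add_distrib, sum_const,
      card_univ, Fintype.card_fin, smul_eq_mul, mul_one]
    linarith [G.degree_le_maxDegree v]
  have hij : i ≠ j := by rintro rfl; omega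
  have hcost : G.partitionCost r P ≤ G.partitionCost r (moveElement P v j) :=
    hmin _ (pairwise_disjoint_moveElement hdisj) (exists_mem_moveElement hcover)
  rw [G.partitionCost_moveElement r hdisj hv hij] at hcost
  omega
end
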